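/- arXiv:2309.07941 — 2 statements merged into one kernel-verified Lean document; each statement's English description precedes it below -/
import Mathlib

section
/- Let (V_k) be a nonnegative adapted process with E[V_{k+1} | F_k] ≤ α·V_k + ϖ, with α ∈ (0,1), ϖ ≥ 0. For any threshold λ > 0 with λ ≥ ϖ/(1−α), we have P{max_{0 ≤ k ≤ T} V_k ≥ λ} ≤ 1 − (1 − V_0/λ)(1 − ϖ/λ)^T. -/
/-!
Let `A k` be the event that `V` stays below `λ` up to time `k` and `W k = ∫_{A k} (λ - V k)`.
Since `A k` is `F k`-measurable, the drift condition gives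
`∫_{A k} (λ - V (k+1)) ≥ ∫_{A k} (λ - α V k - ϖ) ≥ (1 - ϖ/λ) W k`, the last step because
`ϖ/λ ≤ 1 - α` and `V k ≥ 0`. Shrinking `A k` to `A (k+1)` only discards paths on which
`λ - V (k+1) ≤ 0`, so `W (k+1) ≥ (1 - ϖ/λ) W k`. Hence `λ P(A T) ≥ W T ≥ (1 - ϖ/λ)^T (λ - V 0)`,
and `A T` is the complement of the event `max_{k ≤ T} V k ≥ λ`.
-/

open MeasureTheory

section SetIntegral

variable {X : Type*} [MeasurableSpace X] {μ : Measure X} {f : X → ℝ} {s t : Set X}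

theorem setIntegral_le_setIntegral_inter (hs : MeasurableSet s) (ht : MeasurableSet t)
    (hf : IntegrableOn f s μ) (hft : ∀ x ∈ s \ t, f x ≤ 0) :
    ∫ x in s, f x ∂μ ≤ ∫ x in s ∩ t, f x ∂μ := by
  rw [← integral_inter_add_sdiff ht hf]
  linarith [setIntegral_nonpos (μ := μ) (hs.diff ht) hft]

theorem setIntegral_const_sub_le_mul_measureReal [IsFiniteMeasure μ] (c : ℝ)
    (hf : Integrable f μ) (hf_nonneg : 0 ≤ᵐ[μ] f) :
    ∫ x in s, (c - f x) ∂μ ≤ c * μ.real s := by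
  calc ∫ x in s, (c - f x) ∂μ ≤ ∫ _ in s, c ∂μ :=
        setIntegral_mono_ae ((integrable_const c).sub hf).integrableOn
          (integrable_const c).integrableOn
          (hf_nonneg.mono fun x hx => sub_le_self c hx)
    _ = c * μ.real s := by rw [setIntegral_const, smul_eq_mul, mul_comm]

theorem measure_compl_le_ofReal_one_sub [IsProbabilityMeasure μ] (hs : MeasurableSet s)
    {p : ℝ} (hp : p ≤ μ.real s) : μ sᶜ ≤ ENNReal.ofReal (1 - p) := by
  rw [← ofReal_measureReal, probReal_compl_eq_one_sub hs]
  exact ENNReal.ofReal_le_ofReal (by linarith)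

end SetIntegral

theorem setIntegral_le_of_condExp_le {X : Type*} {m m0 : MeasurableSpace X} {μ : Measure X}
    {f g : X → ℝ} {s : Set X} (hm : m ≤ m0) [SigmaFinite (μ.trim hm)]
    (hs : MeasurableSet[m] s) (hf : Integrable f μ) (hg : Integrable g μ)
    (hfg : μ[f | m] ≤ᵐ[μ] g) : ∫ x in s, f x ∂μ ≤ ∫ x in s, g x ∂μ := by
  rw [← setIntegral_condExp hm hf hs]
  exact setIntegral_mono_ae integrable_condExp.integrableOn hg.integrableOn hfg

theorem one_sub_div_mul_sub_le {α ϖ lam v : ℝ} (hlam : 0 < lam) (hb : ϖ / lam ≤ 1 - α)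
    (hv : 0 ≤ v) : (1 - ϖ / lam) * (lam - v) ≤ lam - (α * v + ϖ) := by
  have hϖ : ϖ / lam * lam = ϖ := div_mul_cancel₀ ϖ hlam.ne'
  linarith [mul_le_mul_of_nonneg_right hb hv]

section StayBelow

variable {Ω : Type*} {m0 : MeasurableSpace Ω} {μ : Measure Ω} {F : Filtration ℕ m0}
  {V : ℕ → Ω → ℝ} {lam : ℝ}

def stayBelow (V : ℕ → Ω → ℝ) (lam : ℝ) (k : ℕ) : Set Ω :=
  {ω | ∀ j ≤ k, V j ω < lam}

theorem stayBelow_zero : stayBelow V lam 0 = {ω | V 0 ω < lam} := by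
  simp [stayBelow]

theorem stayBelow_succ (k : ℕ) :
    stayBelow V lam (k + 1) = stayBelow V lam k ∩ {ω | V (k + 1) ω < lam} := by
  ext ω
  simp [stayBelow, Nat.le_succ_iff, or_imp, forall_and]

theorem compl_stayBelow (T : ℕ) : (stayBelow V lam T)ᶜ = {ω | ∃ k ≤ T, lam ≤ V k ω} := by
  ext ω
  simp [stayBelow]

theorem measurableSet_stayBelow (hV : Adapted F V) (k : ℕ) :
    MeasurableSet[F k] (stayBelow V lam k) := by
  induction k with
  | zero =>
    rw [stayBelow_zero]
    exact measurableSet_lt (hV 0) measurable_const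
  | succ k ih =>
    rw [stayBelow_succ]
    exact (F.mono k.le_succ _ ih).inter (measurableSet_lt (hV (k + 1)) measurable_const)

theorem sub_integral_le_setIntegral_stayBelow_zero [IsProbabilityMeasure μ] (hV : Adapted F V)
    (hint : Integrable (V 0) μ) :
    lam - ∫ ω, V 0 ω ∂μ ≤ ∫ ω in stayBelow V lam 0, (lam - V 0 ω) ∂μ := by
  have hA : MeasurableSet (stayBelow V lam 0) := F.le 0 _ (measurableSet_stayBelow hV 0)
  have h := setIntegral_le_setIntegral_inter (f := fun ω => lam - V 0 ω) MeasurableSet.univ hA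
    ((integrable_const lam).sub hint).integrableOn fun ω hω => by
      simp only [Set.mem_sdiff, Set.mem_univ, stayBelow_zero, Set.mem_ofPred_eq, true_and,
        not_lt] at hω
      linarith
  rwa [Set.univ_inter, setIntegral_univ, integral_sub (integrable_const lam) hint,
    integral_const, probReal_univ, one_smul] at h

theorem setIntegral_stayBelow_succ_ge [IsFiniteMeasure μ] {α ϖ : ℝ} (hV : Adapted F V)
    {k : ℕ} (hnn : 0 ≤ᵐ[μ] V k) (hint : Integrable (V k) μ)
    (hint_succ : Integrable (V (k + 1)) μ)
    (hdrift : μ[V (k + 1) | F k] ≤ᵐ[μ] fun ω => α * V k ω + ϖ)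
    (hlam : 0 < lam) (hb : ϖ / lam ≤ 1 - α) :
    (1 - ϖ / lam) * ∫ ω in stayBelow V lam k, (lam - V k ω) ∂μ ≤
      ∫ ω in stayBelow V lam (k + 1), (lam - V (k + 1) ω) ∂μ := by
  set A := stayBelow V lam k
  have hAk : MeasurableSet[F k] A := measurableSet_stayBelow hV k
  have hA : MeasurableSet A := F.le k _ hAk
  have hint_drift : Integrable (fun ω => α * V k ω + ϖ) μ :=
    (hint.const_mul α).add (integrable_const ϖ)
  calc (1 - ϖ / lam) * ∫ ω in A, (lam - V k ω) ∂μ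
      = ∫ ω in A, (1 - ϖ / lam) * (lam - V k ω) ∂μ := (integral_const_mul _ _).symm
    _ ≤ ∫ ω in A, (lam - (α * V k ω + ϖ)) ∂μ :=
        setIntegral_mono_ae (((integrable_const lam).sub hint).const_mul _).integrableOn
          ((integrable_const lam).sub hint_drift).integrableOn
          (hnn.mono fun ω hω => one_sub_div_mul_sub_le hlam hb hω)
    _ ≤ ∫ ω in A, (lam - V (k + 1) ω) ∂μ := by
        rw [integral_sub (integrable_const lam).integrableOn hint_drift.integrableOn,
          integral_sub (integrable_const lam).integrableOn hint_succ.integrableOn]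
        exact sub_le_sub_left
          (setIntegral_le_of_condExp_le (F.le k) hAk hint_succ hint_drift hdrift) _
    _ ≤ ∫ ω in stayBelow V lam (k + 1), (lam - V (k + 1) ω) ∂μ := by
        rw [stayBelow_succ]
        refine setIntegral_le_setIntegral_inter hA
          (measurableSet_lt ((hV (k + 1)).mono (F.le (k + 1)) le_rfl) measurable_const)
          ((integrable_const lam).sub hint_succ).integrableOn fun ω hω => ?_
        simp only [Set.mem_sdiff, Set.mem_ofPred_eq, not_lt] at hω
        linarith [hω.2]

end StayBelow

theorem stmt2_general {Ω : Type*} {m0 : MeasurableSpace Ω} (μ : Measure Ω) [IsProbabilityMeasure μ]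
    (F : Filtration ℕ m0) (V : ℕ → Ω → ℝ) (α ϖ : ℝ) (v0 lam : ℝ)
    (hα0 : 0 < α) (hα1 : α < 1)
    (hadp : Adapted F V)
    (hnn : ∀ k, 0 ≤ᵐ[μ] V k)
    (hint : ∀ k, Integrable (V k) μ)
    (hV0 : V 0 = fun _ => v0)
    (hdrift : ∀ k, μ[V (k + 1) | F k] ≤ᵐ[μ] fun ω => α * V k ω + ϖ)
    (hlam : 0 < lam) (hlam2 : ϖ / (1 - α) ≤ lam) (T : ℕ) :
    μ {ω | ∃ k ≤ T, lam ≤ V k ω} ≤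
      ENNReal.ofReal (1 - (1 - v0 / lam) * (1 - ϖ / lam) ^ T) := by
  have hb : ϖ / lam ≤ 1 - α := (div_le_comm₀ (by linarith) hlam).mp hlam2
  have hb_nonneg : 0 ≤ 1 - ϖ / lam := by linarith
  set W : ℕ → ℝ := fun k => ∫ ω in stayBelow V lam k, (lam - V k ω) ∂μ
  have hW0 : lam - v0 ≤ W 0 := by
    have hmean : ∫ ω, V 0 ω ∂μ = v0 := by simp [hV0]
    exact hmean ▸ sub_integral_le_setIntegral_stayBelow_zero hadp (hint 0)
  have hWT : (1 - ϖ / lam) ^ T * W 0 ≤ W T := geom_le hb_nonneg T fun k _ =>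
    setIntegral_stayBelow_succ_ge hadp (hnn k) (hint k) (hint (k + 1)) (hdrift k) hlam hb
  have hWT_le : W T ≤ lam * μ.real (stayBelow V lam T) :=
    setIntegral_const_sub_le_mul_measureReal lam (hint T) (hnn T)
  rw [← compl_stayBelow]
  refine measure_compl_le_ofReal_one_sub (F.le T _ (measurableSet_stayBelow hadp T)) ?_
  rw [one_sub_div hlam.ne', div_mul_eq_mul_div, div_le_iff₀' hlam]
  nlinarith [mul_le_mul_of_nonneg_left hW0 (pow_nonneg hb_nonneg T)]

/-- Finite-horizon reachability bound, case `λ ≥ ϖ / (1 - α)`: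
`P {max_{0 ≤ k ≤ T} V k ≥ λ} ≤ 1 - (1 - V 0 / λ) * (1 - ϖ / λ) ^ T`. -/
theorem stmt2 {Ω : Type*} {m0 : MeasurableSpace Ω} (μ : Measure Ω) [IsProbabilityMeasure μ]
    (F : Filtration ℕ m0) (V : ℕ → Ω → ℝ) (α ϖ : ℝ) (v0 lam : ℝ)
    (hα0 : 0 < α) (hα1 : α < 1) (hϖ : 0 ≤ ϖ)
    (hadp : Adapted F V)
    (hnn : ∀ k, 0 ≤ᵐ[μ] V k)
    (hint : ∀ k, Integrable (V k) μ)
    (hV0 : V 0 = fun _ => v0)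
    (hdrift : ∀ k, μ[V (k + 1) | F k] ≤ᵐ[μ] fun ω => α * V k ω + ϖ)
    (hlam : 0 < lam) (hv0 : v0 < lam) (hlam2 : ϖ / (1 - α) ≤ lam) (T : ℕ) :
    μ {ω | ∃ k ≤ T, lam ≤ V k ω} ≤
      ENNReal.ofReal (1 - (1 - v0 / lam) * (1 - ϖ / lam) ^ T) :=
  stmt2_general μ F V α ϖ v0 lam hα0 hα1 hadp hnn hint hV0 hdrift hlam hlam2 T
end

section
/- Let (V_k) be a nonnegative adapted process with E[V_{k+1} | F_k] ≤ α·V_k + ϖ, where α ∈ (0,1), ϖ ≥ 0. For any λ > 0 with λ < ϖ/(1−α), we have P{max_{0 ≤ k ≤ T} V_k ≥ λ} ≤ (V_0/λ)·α^T + (ϖ/((1−α)·λ))·(1 − α^T). -/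
/-!
With `c = ϖ / (1 - α)`, the process `Y k = α ^ (T - k) * V k + (1 - α ^ (T - k)) * c`, frozen after
the horizon `T`, is a nonnegative supermartingale: the drift bound is exactly what makes the
geometric weights compensate each step. Since `λ < c`, `Y k ≥ λ` whenever `V k ≥ λ`, so the maximal
inequality for nonnegative supermartingales (optional stopping at the first hitting time of
`[λ, ∞)`, then Markov) gives `λ P(max_{k ≤ T} V k ≥ λ) ≤ E[Y 0] = α ^ T * V 0 + (1 - α ^ T) * c`.
-/

open MeasureTheory

namespace MeasureTheory

variable {Ω : Type*} {m0 : MeasurableSpace Ω} {μ : Measure Ω} {F : Filtration ℕ m0}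

theorem condExp_const_mul_add [IsFiniteMeasure μ] {m : MeasurableSpace Ω} (hm : m ≤ m0)
    {f : Ω → ℝ} (hf : Integrable f μ) (a b : ℝ) :
    μ[fun ω => a * f ω + b | m] =ᵐ[μ] fun ω => a * μ[f | m] ω + b := by
  change μ[a • f + fun _ => b | m] =ᵐ[μ] _
  filter_upwards [condExp_add (hf.smul a) (integrable_const b) m,
    condExp_smul (μ := μ) a f m] with ω hadd hsmul
  rw [hadd, Pi.add_apply, hsmul, condExp_const hm]
  rfl

theorem Supermartingale.integral_stoppedValue_anti [SigmaFiniteFiltration μ F] {f : ℕ → Ω → ℝ}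
    (hf : Supermartingale f F μ) {τ π : Ω → ℕ∞} (hτ : IsStoppingTime F τ)
    (hπ : IsStoppingTime F π) (hle : τ ≤ π) {N : ℕ} (hbdd : ∀ ω, π ω ≤ N) :
    ∫ ω, stoppedValue f π ω ∂μ ≤ ∫ ω, stoppedValue f τ ω ∂μ := by
  have h := hf.neg.expected_stoppedValue_mono hτ hπ hle hbdd
  simp only [stoppedValue, Pi.neg_apply, integral_neg, neg_le_neg_iff] at h
  exact h

theorem Supermartingale.mul_measureReal_exists_le_le_integral [IsFiniteMeasure μ]
    {f : ℕ → Ω → ℝ} (hf : Supermartingale f F μ) (hnn : ∀ k, 0 ≤ᵐ[μ] f k) {lam : ℝ}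
    (hlam : 0 ≤ lam) (n : ℕ) :
    lam * μ.real {ω | ∃ k ≤ n, lam ≤ f k ω} ≤ ∫ ω, f 0 ω ∂μ := by
  set τ : Ω → ℕ∞ := fun ω => (hittingBtwn f (Set.Ici lam) 0 n ω : ℕ)
  have hτ : IsStoppingTime F τ :=
    hf.stronglyAdapted.adapted.isStoppingTime_hittingBtwn measurableSet_Ici
  have hτ_le : ∀ ω, τ ω ≤ n := fun ω => WithTop.coe_le_coe.2 (hittingBtwn_le ω)
  have hhit : {ω | ∃ k ≤ n, lam ≤ f k ω} ⊆ {ω | lam ≤ stoppedValue f τ ω} := by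
    rintro ω ⟨k, hk, hω⟩
    exact stoppedValue_hittingBtwn_mem ⟨k, ⟨Nat.zero_le _, hk⟩, hω⟩
  have hτ_nonneg : 0 ≤ᵐ[μ] stoppedValue f τ := by
    filter_upwards [ae_all_iff.2 hnn] with ω hω using hω _
  calc lam * μ.real {ω | ∃ k ≤ n, lam ≤ f k ω}
      ≤ lam * μ.real {ω | lam ≤ stoppedValue f τ ω} := by gcongr; finiteness
    _ ≤ ∫ ω, stoppedValue f τ ω ∂μ :=
      mul_meas_ge_le_integral_of_nonneg hτ_nonneg
        (integrable_stoppedValue ℕ hτ hf.integrable hτ_le) lam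
    _ ≤ ∫ ω, stoppedValue f (fun _ => (0 : ℕ)) ω ∂μ :=
      hf.integral_stoppedValue_anti (isStoppingTime_const F 0) hτ (fun _ => bot_le) hτ_le
    _ = ∫ ω, f 0 ω ∂μ := rfl

section DriftEnvelope

variable {α c : ℝ} {T : ℕ} {V : ℕ → Ω → ℝ}

/-- Iterating `E[V (k + 1) | F k] ≤ α * V k + (1 - α) * c` from `k` up to the horizon `T` gives
`E[V T | F k] ≤ driftEnvelope α c T V k`. -/
def driftEnvelope (α c : ℝ) (T : ℕ) (V : ℕ → Ω → ℝ) : ℕ → Ω → ℝ :=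
  fun k ω => α ^ (T - k) * V (min k T) ω + (1 - α ^ (T - k)) * c

theorem driftEnvelope_of_le {k : ℕ} (hk : k ≤ T) :
    driftEnvelope α c T V k = fun ω => α ^ (T - k) * V k ω + (1 - α ^ (T - k)) * c := by
  ext ω
  unfold driftEnvelope
  rw [min_eq_left hk]

theorem driftEnvelope_succ_of_le {k : ℕ} (hk : T ≤ k) :
    driftEnvelope α c T V (k + 1) = driftEnvelope α c T V k := by
  unfold driftEnvelope
  simp only [Nat.sub_eq_zero_of_le hk, Nat.sub_eq_zero_of_le (hk.trans k.le_succ),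
    min_eq_right hk, min_eq_right (hk.trans k.le_succ)]

theorem le_driftEnvelope {b : ℝ} (hα₀ : 0 ≤ α) (hα₁ : α ≤ 1) (hbc : b ≤ c) {k : ℕ} {ω : Ω}
    (hbV : b ≤ V (min k T) ω) : b ≤ driftEnvelope α c T V k ω := by
  have h₀ : 0 ≤ α ^ (T - k) := pow_nonneg hα₀ _
  have h₁ : α ^ (T - k) ≤ 1 := pow_le_one₀ hα₀ hα₁
  unfold driftEnvelope
  nlinarith

theorem Adapted.driftEnvelope (hV : Adapted F V) : Adapted F (driftEnvelope α c T V) := fun k =>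
  (((hV (min k T)).mono (F.mono (min_le_left k T)) le_rfl).const_mul _).add_const _

theorem integrable_driftEnvelope [IsFiniteMeasure μ] (hV : ∀ k, Integrable (V k) μ) (k : ℕ) :
    Integrable (driftEnvelope α c T V k) μ :=
  ((hV (min k T)).const_mul _).add (integrable_const _)

theorem condExp_driftEnvelope_succ_le [IsFiniteMeasure μ] {ϖ : ℝ} (hα : 0 ≤ α)
    (hϖ : ϖ ≤ (1 - α) * c) (hadp : Adapted F V) (hint : ∀ k, Integrable (V k) μ) {k : ℕ}
    (hdrift : μ[V (k + 1) | F k] ≤ᵐ[μ] fun ω => α * V k ω + ϖ) :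
    μ[driftEnvelope α c T V (k + 1) | F k] ≤ᵐ[μ] driftEnvelope α c T V k := by
  rcases lt_or_ge k T with hkT | hTk
  · obtain ⟨e, rfl⟩ : ∃ e, T = k + 1 + e := ⟨T - (k + 1), by omega⟩
    rw [driftEnvelope_of_le hkT, driftEnvelope_of_le hkT.le,
      show k + 1 + e - (k + 1) = e by omega, show k + 1 + e - k = e + 1 by omega]
    filter_upwards [condExp_const_mul_add (F.le k) (hint (k + 1)) (α ^ e) ((1 - α ^ e) * c),
      hdrift] with ω hω hdω
    rw [hω, pow_succ]
    have h₀ : 0 ≤ α ^ e := pow_nonneg hα e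
    nlinarith [mul_le_mul_of_nonneg_left hdω h₀]
  · rw [driftEnvelope_succ_of_le hTk,
      condExp_of_stronglyMeasurable (F.le k) (hadp.driftEnvelope k).stronglyMeasurable
        (integrable_driftEnvelope hint k)]

theorem supermartingale_driftEnvelope [IsFiniteMeasure μ] {ϖ : ℝ} (hα : 0 ≤ α)
    (hϖ : ϖ ≤ (1 - α) * c) (hadp : Adapted F V) (hint : ∀ k, Integrable (V k) μ)
    (hdrift : ∀ k, μ[V (k + 1) | F k] ≤ᵐ[μ] fun ω => α * V k ω + ϖ) :
    Supermartingale (driftEnvelope α c T V) F μ :=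
  supermartingale_nat hadp.driftEnvelope.stronglyAdapted (integrable_driftEnvelope hint)
    fun _ => condExp_driftEnvelope_succ_le hα hϖ hadp hint (hdrift _)

end DriftEnvelope

end MeasureTheory

theorem stmt3_general {Ω : Type*} {m0 : MeasurableSpace Ω} (μ : Measure Ω) [IsProbabilityMeasure μ]
    (F : Filtration ℕ m0) (V : ℕ → Ω → ℝ) (α ϖ : ℝ) (v0 lam : ℝ)
    (hα0 : 0 < α) (hα1 : α < 1)
    (hadp : Adapted F V)
    (hnn : ∀ k, 0 ≤ᵐ[μ] V k)
    (hint : ∀ k, Integrable (V k) μ)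
    (hV0 : V 0 = fun _ => v0)
    (hdrift : ∀ k, μ[V (k + 1) | F k] ≤ᵐ[μ] fun ω => α * V k ω + ϖ)
    (hlam : 0 < lam) (hlam2 : lam < ϖ / (1 - α)) (T : ℕ) :
    μ {ω | ∃ k ≤ T, lam ≤ V k ω} ≤
      ENNReal.ofReal ((v0 / lam) * α ^ T + (ϖ / ((1 - α) * lam)) * (1 - α ^ T)) := by
  set c := ϖ / (1 - α) with hc
  have hϖc : ϖ ≤ (1 - α) * c := by rw [hc, mul_div_cancel₀ _ (by linarith)]
  set Y := driftEnvelope α c T V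
  have hY : Supermartingale Y F μ := supermartingale_driftEnvelope hα0.le hϖc hadp hint hdrift
  have hY_nonneg : ∀ k, 0 ≤ᵐ[μ] Y k := fun k => (hnn (min k T)).mono fun _ hω =>
    le_driftEnvelope hα0.le hα1.le (hlam.le.trans hlam2.le) hω
  have hVY : {ω | ∃ k ≤ T, lam ≤ V k ω} ⊆ {ω | ∃ k ≤ T, lam ≤ Y k ω} := by
    rintro ω ⟨k, hk, hω⟩
    exact ⟨k, hk, le_driftEnvelope hα0.le hα1.le hlam2.le (by rwa [min_eq_left hk])⟩
  have hY0 : ∫ ω, Y 0 ω ∂μ = α ^ T * v0 + (1 - α ^ T) * c := by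
    simp [Y, driftEnvelope_of_le (Nat.zero_le T), hV0]
  have hmax := hY.mul_measureReal_exists_le_le_integral hY_nonneg hlam.le T
  calc μ {ω | ∃ k ≤ T, lam ≤ V k ω} ≤ μ {ω | ∃ k ≤ T, lam ≤ Y k ω} := measure_mono hVY
    _ = ENNReal.ofReal (μ.real {ω | ∃ k ≤ T, lam ≤ Y k ω}) :=
      (ofReal_measureReal (measure_ne_top _ _)).symm
    _ ≤ _ := by
      refine ENNReal.ofReal_le_ofReal ((le_div_iff₀' hlam).2 (hmax.trans_eq hY0) |>.trans_eq ?_)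
      field_simp
      ring

/-- Finite-horizon reachability bound, case `λ < ϖ / (1 - α)`:
`P {max_{0 ≤ k ≤ T} V k ≥ λ} ≤ (V 0 / λ) * α ^ T + (ϖ / ((1 - α) * λ)) * (1 - α ^ T)`. -/
theorem stmt3 {Ω : Type*} {m0 : MeasurableSpace Ω} (μ : Measure Ω) [IsProbabilityMeasure μ]
    (F : Filtration ℕ m0) (V : ℕ → Ω → ℝ) (α ϖ : ℝ) (v0 lam : ℝ)
    (hα0 : 0 < α) (hα1 : α < 1) (hϖ : 0 ≤ ϖ)
    (hadp : Adapted F V)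
    (hnn : ∀ k, 0 ≤ᵐ[μ] V k)
    (hint : ∀ k, Integrable (V k) μ)
    (hV0 : V 0 = fun _ => v0)
    (hdrift : ∀ k, μ[V (k + 1) | F k] ≤ᵐ[μ] fun ω => α * V k ω + ϖ)
    (hlam : 0 < lam) (hlam2 : lam < ϖ / (1 - α)) (T : ℕ) :
    μ {ω | ∃ k ≤ T, lam ≤ V k ω} ≤
      ENNReal.ofReal ((v0 / lam) * α ^ T + (ϖ / ((1 - α) * lam)) * (1 - α ^ T)) :=
  stmt3_general μ F V α ϖ v0 lam hα0 hα1 hadp hnn hint hV0 hdrift hlam hlam2 T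
end
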